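/- arXiv:1602.04106 — 4 statements merged into one kernel-verified Lean document; each statement's English description precedes it below -/
import Mathlib

section
/- For each positive integer N there exist polynomials a_0(N,x), ..., a_{N-1}(N,x) in x such that the N-th partial derivative of F(t,x) = e^{x(1-\sqrt{1-2t})} with respect to t equals (\sum_{i=N}^{2N-1} a_{i-N}(N,x) (1-2t)^{-i/2}) F(t,x) for all t < 1/2, and these coefficients satisfy a_0(N,x) = x^N. -/
/-! Writing `r = 1 - 2t`, one has `∂ₜ (r ^ (-m/2) F) = (m r ^ (-(m+2)/2) + x r ^ (-(m+1)/2)) F`,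
so each derivative keeps the shape `(∑ⱼ aⱼ(N, x) r ^ (-(N+j)/2)) F`, with the coefficients obeying
`aⱼ(N+1) = x aⱼ(N) + (N+j-1) aⱼ₋₁(N)`. Hence `a₀(N) = x ^ N`, and `aⱼ(N)` vanishes for `j ≥ N ≥ 1`,
which cuts the sum down to the exponents `-N/2, …, -(2N-1)/2`. -/

open Real Finset

noncomputable def F (x t : ℝ) : ℝ := Real.exp (x * (1 - Real.sqrt (1 - 2 * t)))

open Polynomial

lemma hasDerivAt_one_sub_two_mul_rpow (c : ℝ) {t : ℝ} (ht : t < 1 / 2) :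
    HasDerivAt (fun s : ℝ => (1 - 2 * s) ^ c) (-2 * c * (1 - 2 * t) ^ (c - 1)) t := by
  have h : HasDerivAt (fun s : ℝ => 1 - 2 * s) (-2) t := by
    simpa using ((hasDerivAt_id t).const_mul 2).const_sub 1
  exact (h.rpow_const (Or.inl (by linarith))).congr_deriv (by ring)

lemma hasDerivAt_F (x : ℝ) {t : ℝ} (ht : t < 1 / 2) :
    HasDerivAt (F x) (x * (1 - 2 * t) ^ (-(1 : ℝ) / 2) * F x t) t := by
  have hF : F x = fun s => Real.exp (x * (1 - (1 - 2 * s) ^ (1 / 2 : ℝ))) := by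
    ext s; simp only [F, Real.sqrt_eq_rpow]
  have h := (((hasDerivAt_one_sub_two_mul_rpow (1 / 2) ht).const_sub 1).const_mul x).exp
  rw [hF]
  convert h using 1
  norm_num [F, Real.sqrt_eq_rpow]
  ring

lemma hasDerivAt_rpow_mul_F (m x : ℝ) {t : ℝ} (ht : t < 1 / 2) :
    HasDerivAt (fun s : ℝ => (1 - 2 * s) ^ (-m / 2) * F x s)
      ((m * (1 - 2 * t) ^ (-(m + 2) / 2) + x * (1 - 2 * t) ^ (-(m + 1) / 2)) * F x t) t := by
  have hpos : 0 < 1 - 2 * t := by linarith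
  refine ((hasDerivAt_one_sub_two_mul_rpow (-m / 2) ht).mul (hasDerivAt_F x ht)).congr_deriv ?_
  rw [show -(m + 1) / 2 = -m / 2 + -1 / 2 by ring, Real.rpow_add hpos]
  ring_nf

/-- `derivCoeff N j` is the paper's `a_j(N, x)`. -/
noncomputable def derivCoeff : ℕ → ℕ → ℝ[X]
  | 0, 0 => 1
  | 0, _ + 1 => 0
  | N + 1, 0 => X * derivCoeff N 0
  | N + 1, j + 1 => X * derivCoeff N (j + 1) + C ((N + j : ℕ) : ℝ) * derivCoeff N j

@[simp]
lemma derivCoeff_zero_right (N : ℕ) : derivCoeff N 0 = X ^ N := by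
  induction N with
  | zero => rfl
  | succ N ih => rw [derivCoeff, ih, pow_succ']

lemma derivCoeff_eq_zero_of_lt {N j : ℕ} (h : N < j) : derivCoeff N j = 0 := by
  induction N generalizing j with
  | zero => obtain ⟨j, rfl⟩ := Nat.exists_eq_add_one_of_ne_zero h.ne'; rfl
  | succ N ih =>
    obtain ⟨j, rfl⟩ := Nat.exists_eq_add_one_of_ne_zero (by omega : j ≠ 0)
    rw [derivCoeff, ih (by omega), ih (by omega), mul_zero, mul_zero, add_zero]

lemma derivCoeff_self {N : ℕ} (hN : 1 ≤ N) : derivCoeff N N = 0 := by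
  induction N, hN using Nat.le_induction with
  | base => simp [derivCoeff]
  | succ N _ ih => rw [derivCoeff, derivCoeff_eq_zero_of_lt N.lt_succ_self, ih]; simp

noncomputable def derivSum (N : ℕ) (x t : ℝ) : ℝ :=
  ∑ j ∈ range (N + 1), (derivCoeff N j).eval x * (1 - 2 * t) ^ (-((N + j : ℕ) : ℝ) / 2)

lemma derivSum_succ (N : ℕ) (x t : ℝ) :
    derivSum (N + 1) x t = ∑ j ∈ range (N + 1), (derivCoeff N j).eval x *
      (((N + j : ℕ) : ℝ) * (1 - 2 * t) ^ (-(((N + j : ℕ) : ℝ) + 2) / 2)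
        + x * (1 - 2 * t) ^ (-(((N + j : ℕ) : ℝ) + 1) / 2)) := by
  set g : ℕ → ℝ := fun j =>
    x * (derivCoeff N j).eval x * (1 - 2 * t) ^ (-((N + 1 + j : ℕ) : ℝ) / 2)
  have hshift : ∑ j ∈ range (N + 1),
        (derivCoeff N j).eval x * (x * (1 - 2 * t) ^ (-(((N + j : ℕ) : ℝ) + 1) / 2))
      = ∑ j ∈ range (N + 1), g (j + 1) + g 0 := by
    have hg : g (N + 1) = 0 := by simp [g, derivCoeff_eq_zero_of_lt N.lt_succ_self]
    rw [← sum_range_succ' g, sum_range_succ _ (N + 1), hg, add_zero]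
    refine sum_congr rfl fun j _ => ?_
    simp only [g]; push_cast; ring_nf
  have hraise : ∑ j ∈ range (N + 1), ((N + j : ℕ) : ℝ) * (derivCoeff N j).eval x *
        (1 - 2 * t) ^ (-((N + 1 + (j + 1) : ℕ) : ℝ) / 2)
      = ∑ j ∈ range (N + 1), (derivCoeff N j).eval x *
        (((N + j : ℕ) : ℝ) * (1 - 2 * t) ^ (-(((N + j : ℕ) : ℝ) + 2) / 2)) := by
    refine sum_congr rfl fun j _ => ?_
    push_cast; ring_nf
  rw [derivSum, sum_range_succ']
  simp only [derivCoeff, eval_add, eval_mul, eval_X, eval_C, add_mul, mul_add, sum_add_distrib]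
  rw [hshift, hraise]
  ring

lemma hasDerivAt_derivSum_mul_F (N : ℕ) (x : ℝ) {t : ℝ} (ht : t < 1 / 2) :
    HasDerivAt (fun s => derivSum N x s * F x s) (derivSum (N + 1) x t * F x t) t := by
  have h := HasDerivAt.fun_sum (u := range (N + 1)) fun j _ =>
    (hasDerivAt_rpow_mul_F ((N + j : ℕ) : ℝ) x ht).const_mul ((derivCoeff N j).eval x)
  have hfun : (fun s => derivSum N x s * F x s) = fun s => ∑ j ∈ range (N + 1),
      (derivCoeff N j).eval x * ((1 - 2 * s) ^ (-((N + j : ℕ) : ℝ) / 2) * F x s) := by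
    ext s; simp only [derivSum, sum_mul, mul_assoc]
  rw [hfun, derivSum_succ, sum_mul]
  refine h.congr_deriv (sum_congr rfl fun j _ => ?_)
  ring

lemma iteratedDeriv_F (N : ℕ) (x : ℝ) {t : ℝ} (ht : t < 1 / 2) :
    iteratedDeriv N (F x) t = derivSum N x t * F x t := by
  induction N generalizing t with
  | zero => simp [derivSum]
  | succ N ih =>
    have h : iteratedDeriv N (F x) =ᶠ[nhds t] fun s => derivSum N x s * F x s := by
      filter_upwards [Iio_mem_nhds ht] with s hs using ih hs
    rw [iteratedDeriv_succ, h.deriv_eq, (hasDerivAt_derivSum_mul_F N x ht).deriv]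

theorem exists_coeffs_for_Nth_deriv (N : ℕ) (hN : 1 ≤ N) :
    ∃ a : ℕ → Polynomial ℝ,
      (∀ x t : ℝ, t < 1 / 2 →
        iteratedDeriv N (F x) t =
          (∑ i ∈ Finset.Icc N (2 * N - 1),
            (a (i - N)).eval x * (1 - 2 * t) ^ (-(i : ℝ) / 2)) * F x t) ∧
      a 0 = Polynomial.X ^ N := by
  refine ⟨derivCoeff N, fun x t ht => ?_, derivCoeff_zero_right N⟩
  rw [iteratedDeriv_F N x ht, derivSum, sum_range_succ, derivCoeff_self hN, eval_zero, zero_mul,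
    add_zero, ← Ico_add_one_right_eq_Icc, Nat.sub_add_cancel (by omega), sum_Ico_eq_sum_range,
    show 2 * N - N = N by omega]
  simp only [Nat.add_sub_cancel_left]
end

section
/- Define coefficients a_j(N,x) by the recurrences a_0(1,x) = x, a_0(N+1,x) = x a_0(N,x), a_N(N+1,x) = (2N-1) a_{N-1}(N,x), and a_{i-N}(N+1,x) = (i-1) a_{i-N-1}(N,x) + x a_{i-N}(N,x) for N+1 \le i \le 2N-1. Then for 1 \le j \le N-1, a_j(N+1,x) = \sum_{i=0}^{N-j} x^i (N-i+j-1) a_{j-1}(N-i,x). -/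
open Finset

theorem a_recurrence_sum (a : ℕ → ℕ → ℝ → ℝ)
    (h1 : ∀ x : ℝ, a 0 1 x = x)
    (h2 : ∀ N : ℕ, 1 ≤ N → ∀ x : ℝ, a 0 (N + 1) x = x * a 0 N x)
    (h3 : ∀ N : ℕ, 1 ≤ N → ∀ x : ℝ, a N (N + 1) x = ((2 * N - 1 : ℕ) : ℝ) * a (N - 1) N x)
    (h4 : ∀ N : ℕ, 1 ≤ N → ∀ i : ℕ, N + 1 ≤ i → i ≤ 2 * N - 1 → ∀ x : ℝ,
      a (i - N) (N + 1) x = ((i - 1 : ℕ) : ℝ) * a (i - N - 1) N x + x * a (i - N) N x) :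
    ∀ N : ℕ, 1 ≤ N → ∀ j : ℕ, 1 ≤ j → j ≤ N - 1 → ∀ x : ℝ,
      a j (N + 1) x =
        ∑ i ∈ Finset.range (N - j + 1),
          x ^ i * ((N - i + j - 1 : ℕ) : ℝ) * a (j - 1) (N - i) x := by
  intro N
  induction N with
  | zero => intro h; omega
  | succ N ih =>
    intro _ j hj1 hj2 x
    have hjN : j ≤ N := by omega
    have hN1 : 1 ≤ N := by omega
    -- inner formula: a j (N+1) x equals the sum at level N
    have hS : a j (N + 1) x =
        ∑ i ∈ Finset.range (N - j + 1),
          x ^ i * ((N - i + j - 1 : ℕ) : ℝ) * a (j - 1) (N - i) x := by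
      rcases eq_or_lt_of_le hjN with hEq | hLt
      · subst hEq
        have h3' := h3 j hj1 x
        have : j - j + 1 = 1 := by omega
        rw [this, Finset.sum_range_one]
        have e1 : j - 0 + j - 1 = 2 * j - 1 := by omega
        have e2 : j - 0 = j := by omega
        rw [e1, e2, pow_zero, one_mul, h3']
      · exact ih hN1 j hj1 (by omega) x
    -- main recurrence from h4 with i = N + 1 + j
    have key := h4 (N + 1) (by omega) (N + 1 + j) (by omega) (by omega) x
    have e1 : N + 1 + j - (N + 1) = j := by omega
    have e2 : N + 1 + j - (N + 1) - 1 = j - 1 := by omega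
    have e3 : N + 1 + j - 1 = N + j := by omega
    rw [e1, e3] at key
    rw [key, hS]
    -- now compute RHS: split off i = 0 term
    have hrange : N + 1 - j + 1 = (N - j + 1) + 1 := by omega
    conv_rhs => rw [hrange, Finset.sum_range_succ']
    have hterm0 : x ^ 0 * ((N + 1 - 0 + j - 1 : ℕ) : ℝ) * a (j - 1) (N + 1 - 0) x
        = ((N + j : ℕ) : ℝ) * a (j - 1) (N + 1) x := by
      have : N + 1 - 0 + j - 1 = N + j := by omega
      rw [this]
      have : N + 1 - 0 = N + 1 := by omega
      rw [this, pow_zero, one_mul]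
    rw [hterm0]
    rw [Finset.mul_sum]
    rw [add_comm]
    congr 1
    apply Finset.sum_congr rfl
    intro i hi
    simp only [Finset.mem_range] at hi
    have e4 : N + 1 - (i + 1) + j - 1 = N - i + j - 1 := by omega
    have e5 : N + 1 - (i + 1) = N - i := by omega
    rw [e4, e5, pow_succ]
    ring
end

section
/- Define coefficients a_j(N,x) by the recurrences a_0(1,x) = x, a_0(N+1,x) = x a_0(N,x), a_N(N+1,x) = (2N-1) a_{N-1}(N,x), and a_{i-N}(N+1,x) = (i-1) a_{i-N-1}(N,x) + x a_{i-N}(N,x) for N+1 \le i \le 2N-1. Then a_2(N+1,x) = x^{N-1} \sum_{i_2=0}^{N-2} \sum_{i_1=0}^{N-2-i_2} (N-i_2+1)(N-i_2-i_1-1) for all N \geq 2. -/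
open Finset

def Tn (N : ℕ) : ℕ := ∑ i ∈ Finset.range N, (i + 1)

def Sn (N : ℕ) : ℕ :=
  ∑ i₂ ∈ Finset.range (N - 1), ∑ i₁ ∈ Finset.range (N - 1 - i₂),
    (N - i₂ + 1) * (N - i₂ - i₁ - 1)

lemma innerSumTn (M : ℕ) : ∑ i ∈ Finset.range M, (M - i) = Tn M := by
  rw [Tn, ← Finset.sum_range_reflect (fun i => i + 1) M]
  apply Finset.sum_congr rfl
  intro i hi
  simp only [Finset.mem_range] at hi
  omega

lemma Sn_succ (N : ℕ) (hN : 1 ≤ N) : Sn (N + 1) = (N + 2) * Tn N + Sn N := by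
  obtain ⟨M, rfl⟩ : ∃ M, N = M + 1 := ⟨N - 1, by omega⟩
  rw [Sn, show M + 1 + 1 - 1 = M + 1 from rfl, Finset.sum_range_succ', add_comm]
  congr 1
  · rw [← innerSumTn (M + 1), Finset.mul_sum]
    apply Finset.sum_congr (by congr 1 <;> omega)
    intro i hi
    simp only [Finset.mem_range] at hi
    congr 1 <;> omega
  · rw [Sn]
    apply Finset.sum_congr (by congr 1 <;> omega)
    intro i₂ hi₂
    simp only [Finset.mem_range] at hi₂
    apply Finset.sum_congr (by congr 1 <;> omega)
    intro i₁ hi₁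
    simp only [Finset.mem_range] at hi₁
    congr 1 <;> omega

theorem a_two_explicit (a : ℕ → ℕ → ℝ → ℝ)
    (h1 : ∀ x : ℝ, a 0 1 x = x)
    (h2 : ∀ N : ℕ, 1 ≤ N → ∀ x : ℝ, a 0 (N + 1) x = x * a 0 N x)
    (h3 : ∀ N : ℕ, 1 ≤ N → ∀ x : ℝ, a N (N + 1) x = ((2 * N - 1 : ℕ) : ℝ) * a (N - 1) N x)
    (h4 : ∀ N : ℕ, 1 ≤ N → ∀ i : ℕ, N + 1 ≤ i → i ≤ 2 * N - 1 → ∀ x : ℝ,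
      a (i - N) (N + 1) x = ((i - 1 : ℕ) : ℝ) * a (i - N - 1) N x + x * a (i - N) N x) :
    ∀ N : ℕ, 2 ≤ N → ∀ x : ℝ,
      a 2 (N + 1) x =
        x ^ (N - 1) * ∑ i₂ ∈ Finset.range (N - 1), ∑ i₁ ∈ Finset.range (N - 1 - i₂),
          ((N - i₂ + 1 : ℕ) : ℝ) * ((N - i₂ - i₁ - 1 : ℕ) : ℝ) := by
  have L0 : ∀ N : ℕ, 1 ≤ N → ∀ x : ℝ, a 0 N x = x ^ N := by
    intro N hN
    induction N with
    | zero => omega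
    | succ n ih =>
      intro x
      rcases Nat.eq_or_lt_of_le hN with h | h
      · simp [← h, h1 x]
      · have hn : 1 ≤ n := by omega
        rw [h2 n hn x, ih hn x, pow_succ]
        ring
  have L1 : ∀ N : ℕ, 1 ≤ N → ∀ x : ℝ, a 1 (N + 1) x = x ^ N * (Tn N : ℝ) := by
    intro N hN
    induction N with
    | zero => omega
    | succ n ih =>
      intro x
      rcases Nat.eq_or_lt_of_le hN with h | h
      · have := h3 1 le_rfl x
        simp at this
        rw [← h]
        simpa [Tn, h1 x] using this
      · have hn : 1 ≤ n := by omega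
        have h4' := h4 (n + 1) (by omega) (n + 2) (by omega) (by omega) x
        simp only [show n + 2 - (n + 1) = 1 from by omega, show (1:ℕ) - 1 = 0 from rfl,
          show n + 2 - 1 = n + 1 from by omega] at h4'
        rw [h4', L0 (n + 1) (by omega) x, ih hn x,
          show Tn (n + 1) = Tn n + (n + 1) from Finset.sum_range_succ _ n]
        push_cast
        ring
  have L2 : ∀ N : ℕ, 2 ≤ N → ∀ x : ℝ, a 2 (N + 1) x = x ^ (N - 1) * (Sn N : ℝ) := by
    intro N hN
    induction N with
    | zero => omega
    | succ n ih =>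
      intro x
      rcases Nat.eq_or_lt_of_le hN with h | h
      · have h32 := h3 2 (by omega) x
        norm_num at h32
        rw [← h, h32, L1 1 le_rfl x]
        have : Sn 2 = 3 := by decide
        rw [this]
        norm_num [Tn]
        ring
      · have hn : 2 ≤ n := by omega
        have h4' := h4 (n + 1) (by omega) (n + 3) (by omega) (by omega) x
        simp only [show n + 3 - (n + 1) = 2 from by omega, show (2:ℕ) - 1 = 1 from rfl,
          show n + 3 - 1 = n + 2 from by omega] at h4'
        rw [h4', L1 n (by omega) x, ih hn x, Sn_succ n (by omega),
          show n + 1 - 1 = n from by omega,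
          show x ^ n = x * x ^ (n - 1) from by rw [← pow_succ']; congr 1; omega]
        push_cast
        ring
  intro N hN x
  rw [L2 N hN x]
  congr 1
  push_cast [Sn]
  rfl
end

section
/- Define coefficients a_j(N,x) by the recurrences a_0(1,x) = x, a_0(N+1,x) = x a_0(N,x), a_N(N+1,x) = (2N-1) a_{N-1}(N,x), and a_{i-N}(N+1,x) = (i-1) a_{i-N-1}(N,x) + x a_{i-N}(N,x) for N+1 \le i \le 2N-1. Then for 1 \le j \le N-1, a_j(N,x) = x^{N-j} \sum_{i_j=0}^{N-j-1} \sum_{i_{j-1}=0}^{N-j-1-i_j} \cdots \sum_{i_1=0}^{N-j-1-i_j-\cdots-i_2} \prod_{k=1}^{j} (N - i_j - i_{j-1} - \cdots - i_k - (j - (2k-2))). -/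
open Finset

noncomputable def S (j N : ℕ) : ℝ :=
  ∑ i ∈ (Fintype.piFinset fun _ : Fin j => Finset.range (N - j)).filter
      (fun i => ∑ m, i m ≤ N - j - 1),
    ∏ k ∈ Finset.range j,
      ((N : ℝ) - (∑ m ∈ Finset.univ.filter (fun m : Fin j => k ≤ m.val), (i m : ℝ))
        - ((j : ℝ) - 2 * k))

lemma filter_sum_succ {d : ℕ} (k : ℕ) (f : Fin (d+1) → ℝ) :
    ∑ m ∈ Finset.univ.filter (fun m : Fin (d+1) => k ≤ m.val), f m
      = (∑ m ∈ Finset.univ.filter (fun m : Fin d => k ≤ m.val), f m.castSucc)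
        + (if k ≤ d then f (Fin.last d) else 0) := by
  rw [Finset.sum_filter, Finset.sum_filter, Fin.sum_univ_castSucc]
  simp

lemma filter_ge_empty (d : ℕ) :
    Finset.univ.filter (fun m : Fin d => d ≤ m.val) = ∅ := by
  apply Finset.filter_false_of_mem
  intro m _
  have := m.isLt
  omega

lemma key (d N : ℕ) (hdN : d + 1 ≤ N) :
    S (d+1) (N+1) = ((N : ℝ) + d) * S d N + S (d+1) N := by
  unfold S
  have hb : N + 1 - (d + 1) = N - d := by omega
  rw [hb]
  rw [← Finset.sum_filter_add_sum_filter_not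
      ((Fintype.piFinset fun _ : Fin (d+1) => Finset.range (N - d)).filter
        (fun i => ∑ m, i m ≤ N - d - 1)) (fun i => i (Fin.last d) = 0)]
  congr 1
  · -- part with i last = 0, equals (N+d) * S d N
    rw [Finset.mul_sum]
    apply Finset.sum_nbij' (i := fun (i : Fin (d+1) → ℕ) (m : Fin d) => i m.castSucc)
      (j := fun (i : Fin d → ℕ) => Fin.snoc i 0)
    · intro i hi
      simp only [Finset.mem_filter, Fintype.mem_piFinset, Finset.mem_range] at hi ⊢
      obtain ⟨⟨hlt, hsum⟩, hlast⟩ := hi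
      refine ⟨fun m => hlt m.castSucc, ?_⟩
      rw [Fin.sum_univ_castSucc] at hsum
      omega
    · intro i hi
      simp only [Finset.mem_filter, Fintype.mem_piFinset, Finset.mem_range] at hi ⊢
      obtain ⟨hlt, hsum⟩ := hi
      refine ⟨⟨?_, ?_⟩, ?_⟩
      · intro m
        refine Fin.lastCases ?_ ?_ m
        · simp [Fin.snoc_last]; omega
        · intro m; simpa [Fin.snoc_castSucc] using hlt m
      · rw [Fin.sum_univ_castSucc]
        simp [Fin.snoc_castSucc, Fin.snoc_last]
        omega
      · simp [Fin.snoc_last]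
    · intro i hi
      simp only [Finset.mem_filter] at hi
      funext m
      refine Fin.lastCases ?_ ?_ m
      · simp [Fin.snoc_last, hi.2]
      · intro m; simp [Fin.snoc_castSucc]
    · intro i hi
      funext m
      simp [Fin.snoc_castSucc]
    · intro i hi
      simp only [Finset.mem_filter, Fintype.mem_piFinset, Finset.mem_range] at hi
      obtain ⟨⟨hlt, hsum⟩, hlast⟩ := hi
      rw [Finset.prod_range_succ]
      have hT : ∀ k : ℕ,
          (∑ m ∈ Finset.univ.filter (fun m : Fin (d+1) => k ≤ m.val), (i m : ℝ))
            = (∑ m ∈ Finset.univ.filter (fun m : Fin d => k ≤ m.val), (i m.castSucc : ℝ))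
              + (if k ≤ d then (i (Fin.last d) : ℝ) else 0) :=
        fun k => filter_sum_succ k _
      have hlastfac :
          ((N+1 : ℕ) : ℝ) - (∑ m ∈ Finset.univ.filter (fun m : Fin (d+1) => d ≤ m.val), (i m : ℝ))
            - (((d+1 : ℕ) : ℝ) - 2 * d) = (N : ℝ) + d := by
        rw [hT d, filter_ge_empty, Finset.sum_empty, hlast, if_pos (le_refl d)]
        push_cast
        ring
      rw [hlastfac, mul_comm]
      congr 1
      apply Finset.prod_congr rfl
      intro k hk
      simp only [Finset.mem_range] at hk
      rw [hT k, if_pos (by omega : k ≤ d), hlast]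
      push_cast
      ring
  · -- part with i last ≠ 0, equals S (d+1) N
    apply Finset.sum_nbij'
      (i := fun (i : Fin (d+1) → ℕ) => Function.update i (Fin.last d) (i (Fin.last d) - 1))
      (j := fun (i : Fin (d+1) → ℕ) => Function.update i (Fin.last d) (i (Fin.last d) + 1))
    · intro i hi
      simp only [Finset.mem_filter, Fintype.mem_piFinset, Finset.mem_range] at hi ⊢
      obtain ⟨⟨hlt, hsum⟩, hlast⟩ := hi
      have hpos : 1 ≤ i (Fin.last d) := Nat.one_le_iff_ne_zero.2 hlast
      have hs : ∑ m, Function.update i (Fin.last d) (i (Fin.last d) - 1) m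
          = (∑ m : Fin d, i m.castSucc) + (i (Fin.last d) - 1) := by
        rw [Fin.sum_univ_castSucc]
        congr 1
        · apply Finset.sum_congr rfl
          intro m _
          rw [Function.update_of_ne (Fin.castSucc_lt_last m).ne]
        · rw [Function.update_self]
      have hs0 : ∑ m, i m = (∑ m : Fin d, i m.castSucc) + i (Fin.last d) :=
        Fin.sum_univ_castSucc i
      constructor
      · intro m
        calc Function.update i (Fin.last d) (i (Fin.last d) - 1) m
            ≤ ∑ m', Function.update i (Fin.last d) (i (Fin.last d) - 1) m' :=
              Finset.single_le_sum (fun _ _ => Nat.zero_le _) (Finset.mem_univ m)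
          _ < N - (d+1) := by rw [hs]; omega
      · rw [hs]; omega
    · intro i hi
      simp only [Finset.mem_filter, Fintype.mem_piFinset, Finset.mem_range] at hi ⊢
      obtain ⟨hlt, hsum⟩ := hi
      have hs : ∑ m, Function.update i (Fin.last d) (i (Fin.last d) + 1) m
          = (∑ m : Fin d, i m.castSucc) + (i (Fin.last d) + 1) := by
        rw [Fin.sum_univ_castSucc]
        congr 1
        · apply Finset.sum_congr rfl
          intro m _
          rw [Function.update_of_ne (Fin.castSucc_lt_last m).ne]
        · rw [Function.update_self]
      have hs0 : ∑ m, i m = (∑ m : Fin d, i m.castSucc) + i (Fin.last d) :=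
        Fin.sum_univ_castSucc i
      refine ⟨⟨?_, ?_⟩, ?_⟩
      · intro m
        rcases eq_or_ne m (Fin.last d) with rfl | hm
        · rw [Function.update_self]
          have := hlt (Fin.last d); omega
        · rw [Function.update_of_ne hm]
          have := hlt m; omega
      · have hx := hlt (Fin.last d)
        rw [hs]; omega
      · rw [Function.update_self]; omega
    · intro i hi
      simp only [Finset.mem_filter] at hi
      have hpos : 1 ≤ i (Fin.last d) := Nat.one_le_iff_ne_zero.2 hi.2
      funext m
      rcases eq_or_ne m (Fin.last d) with rfl | hm
      · simp [Function.update_self]; omega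
      · simp [Function.update_of_ne hm]
    · intro i hi
      funext m
      rcases eq_or_ne m (Fin.last d) with rfl | hm
      · simp [Function.update_self]
      · simp [Function.update_of_ne hm]
    · intro i hi
      simp only [Finset.mem_filter, Fintype.mem_piFinset, Finset.mem_range] at hi
      obtain ⟨⟨hlt, hsum⟩, hlast⟩ := hi
      have hpos : 1 ≤ i (Fin.last d) := Nat.one_le_iff_ne_zero.2 hlast
      apply Finset.prod_congr rfl
      intro k hk
      simp only [Finset.mem_range] at hk
      rw [filter_sum_succ k (fun m => (i m : ℝ)),
          filter_sum_succ k (fun m => ((Function.update i (Fin.last d) (i (Fin.last d) - 1)) m : ℝ)),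
          if_pos (by omega : k ≤ d), if_pos (by omega : k ≤ d)]
      have h1 : (∑ m ∈ Finset.univ.filter (fun m : Fin d => k ≤ m.val),
            ((Function.update i (Fin.last d) (i (Fin.last d) - 1)) m.castSucc : ℝ))
          = ∑ m ∈ Finset.univ.filter (fun m : Fin d => k ≤ m.val), (i m.castSucc : ℝ) := by
        apply Finset.sum_congr rfl
        intro m _
        rw [Function.update_of_ne (Fin.castSucc_lt_last m).ne]
      rw [h1, Function.update_self]
      have h2 : ((i (Fin.last d) - 1 : ℕ) : ℝ) = (i (Fin.last d) : ℝ) - 1 := by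
        rw [Nat.cast_sub hpos]; push_cast; ring
      rw [h2]
      push_cast
      ring

lemma S_zero (N : ℕ) : S 0 N = 1 := by
  simp [S]

lemma S_diag (N : ℕ) (h : 1 ≤ N) : S N N = 0 := by
  unfold S
  rw [Finset.sum_eq_zero]
  intro i hi
  simp only [Finset.mem_filter, Fintype.mem_piFinset, Finset.mem_range] at hi
  have := hi.1 ⟨0, h⟩
  omega

lemma main_lemma (a : ℕ → ℕ → ℝ → ℝ)
    (h1 : ∀ x : ℝ, a 0 1 x = x)
    (h2 : ∀ N : ℕ, 1 ≤ N → ∀ x : ℝ, a 0 (N + 1) x = x * a 0 N x)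
    (h3 : ∀ N : ℕ, 1 ≤ N → ∀ x : ℝ, a N (N + 1) x = ((2 * N - 1 : ℕ) : ℝ) * a (N - 1) N x)
    (h4 : ∀ N : ℕ, 1 ≤ N → ∀ i : ℕ, N + 1 ≤ i → i ≤ 2 * N - 1 → ∀ x : ℝ,
      a (i - N) (N + 1) x = ((i - 1 : ℕ) : ℝ) * a (i - N - 1) N x + x * a (i - N) N x) :
    ∀ N : ℕ, 1 ≤ N → ∀ j : ℕ, j ≤ N - 1 → ∀ x : ℝ, a j N x = x ^ (N - j) * S j N := by
  intro N
  induction N with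
  | zero => exact fun h => absurd h (by omega)
  | succ n ih =>
    intro _ j hj x
    rcases Nat.eq_zero_or_pos n with rfl | hn
    · have hj0 : j = 0 := by omega
      subst hj0
      simp [h1, S_zero]
    · rcases Nat.eq_zero_or_pos j with rfl | hjpos
      · rw [h2 n hn, ih hn 0 (by omega) x, S_zero, S_zero]
        rw [Nat.sub_zero, Nat.sub_zero, pow_succ]
        ring
      · rcases eq_or_lt_of_le (show j ≤ n by omega) with rfl | hjlt
        · rw [h3 j hn x, ih hn (j - 1) (by omega) x]
          have hkey := key (j - 1) j (by omega)
          rw [show j - 1 + 1 = j from by omega] at hkey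
          rw [hkey, S_diag j hn]
          rw [show j + 1 - j = 1 from by omega, show j - (j - 1) = 1 from by omega]
          rw [show (2 * j - 1 : ℕ) = j + (j - 1) from by omega, Nat.cast_add]
          ring
        · have h4' := h4 n hn (n + j) (by omega) (by omega) x
          rw [show n + j - n = j from by omega] at h4'
          rw [h4', ih hn j (by omega) x, ih hn (j - 1) (by omega) x]
          have hkey := key (j - 1) n (by omega)
          rw [show j - 1 + 1 = j from by omega] at hkey
          rw [hkey]
          rw [show n - (j - 1) = (n - j) + 1 from by omega,
              show n + 1 - j = (n - j) + 1 from by omega]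
          rw [show (n + j - 1 : ℕ) = n + (j - 1) from by omega, Nat.cast_add]
          ring


theorem a_j_explicit (a : ℕ → ℕ → ℝ → ℝ)
    (h1 : ∀ x : ℝ, a 0 1 x = x)
    (h2 : ∀ N : ℕ, 1 ≤ N → ∀ x : ℝ, a 0 (N + 1) x = x * a 0 N x)
    (h3 : ∀ N : ℕ, 1 ≤ N → ∀ x : ℝ, a N (N + 1) x = ((2 * N - 1 : ℕ) : ℝ) * a (N - 1) N x)
    (h4 : ∀ N : ℕ, 1 ≤ N → ∀ i : ℕ, N + 1 ≤ i → i ≤ 2 * N - 1 → ∀ x : ℝ,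
      a (i - N) (N + 1) x = ((i - 1 : ℕ) : ℝ) * a (i - N - 1) N x + x * a (i - N) N x) :
    ∀ N : ℕ, 1 ≤ N → ∀ j : ℕ, 1 ≤ j → j ≤ N - 1 → ∀ x : ℝ,
      a j N x =
        x ^ (N - j) *
          ∑ i ∈ (Fintype.piFinset fun _ : Fin j => Finset.range (N - j)).filter
              (fun i => ∑ m, i m ≤ N - j - 1),
            ∏ k ∈ Finset.range j,
              ((N : ℝ) - (∑ m ∈ Finset.univ.filter (fun m : Fin j => k ≤ m.val), (i m : ℝ))
                - ((j : ℝ) - 2 * k)) := by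
  intro N hN j hj1 hjN x
  exact main_lemma a h1 h2 h3 h4 N hN j hjN x
end
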